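/- For every propositional base K and every formula φ, K ⊩_{a2} φ if and only if K ⊩₂ φ. -/

import Mathlib

namespace Occ

/-- Propositional formulas over variables indexed by `ℕ`,
built from variables using negation and conjunction. -/
inductive Form : Type where
  | var : ℕ → Form
  | neg : Form → Form
  | conj : Form → Form → Form
deriving DecidableEq

/-- Boolean evaluation of a formula under an interpretation `w`. -/
def eval (w : ℕ → Bool) : Form → Bool
  | .var p => w p
  | .neg φ => !(eval w φ)
  | .conj φ ψ => eval w φ && eval w ψ

/-- The variables occurring in a formula. -/
def vars : Form → Finset ℕ
  | .var p => {p}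
  | .neg φ => vars φ
  | .conj φ ψ => vars φ ∪ vars ψ

/-- A step in a path addressing a subformula occurrence. -/
inductive Step : Type where
  | neg | left | right
deriving DecidableEq

/-- `occAt φ l pol = some (p, pol')` iff the path `l` addresses an occurrence of the
variable `p` in `φ`, and this occurrence has polarity `pol'` (`true` = positive)
when the ambient polarity of `φ` is `pol`. -/
def occAt : Form → List Step → Bool → Option (ℕ × Bool)
  | .var p, [], pol => some (p, pol)
  | .neg φ, .neg :: l, pol => occAt φ l (!pol)
  | .conj φ _, .left :: l, pol => occAt φ l pol
  | .conj _ ψ, .right :: l, pol => occAt ψ l pol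
  | _, _, _ => none

/-- A variable occurrence in a base: a formula together with a path into it. -/
abbrev Occurrence : Type := Form × List Step

/-- A propositional base: a finite set of formulas. -/
abbrev PB : Type := Finset Form

/-- `o` is a variable occurrence in the base `K`. -/
def IsOcc (K : PB) (o : Occurrence) : Prop :=
  o.1 ∈ K ∧ ∃ p pol, occAt o.1 o.2 true = some (p, pol)

/-- `o` is an occurrence of the variable `p` in `K`, of polarity `pol`. -/
def IsOccOf (K : PB) (o : Occurrence) (p : ℕ) (pol : Bool) : Prop :=
  o.1 ∈ K ∧ occAt o.1 o.2 true = some (p, pol)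

/-- `o` is an occurrence of the variable `p` in `K`. -/
def IsOccVar (K : PB) (o : Occurrence) (p : ℕ) : Prop :=
  ∃ pol, IsOccOf K o p pol

/-- `o` is a positive variable occurrence in `K`. -/
def IsPosOcc (K : PB) (o : Occurrence) : Prop := ∃ p, IsOccOf K o p true

/-- `o` is a negative variable occurrence in `K`. -/
def IsNegOcc (K : PB) (o : Occurrence) : Prop := ∃ p, IsOccOf K o p false

/-- `o` and `o'` are occurrences of the same variable. -/
def sameVar (o o' : Occurrence) : Prop :=
  ∃ p pol pol', occAt o.1 o.2 true = some (p, pol) ∧ occAt o'.1 o'.2 true = some (p, pol')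

/-- The variables occurring in a base. -/
def varsPB (K : PB) : Finset ℕ := K.sup vars

/-- `w` is a (Boolean) model of the base `K` (i.e. of the conjunction of its formulas). -/
def modelsPB (w : ℕ → Bool) (K : PB) : Prop := ∀ φ ∈ K, eval w φ = true

/-- A base is consistent iff the conjunction of its formulas has a model. -/
def ConsistentPB (K : PB) : Prop := ∃ w, modelsPB w K

/-- Classical entailment from a base. -/
def Entails (K : PB) (φ : Form) : Prop := ∀ w, modelsPB w K → eval w φ = true

/-- Rename every variable occurrence of a formula, the new variable of the
occurrence at path `l` being `f l`. -/
def renameBy : (List Step → ℕ) → Form → Form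
  | f, .var _ => .var (f [])
  | f, .neg φ => .neg (renameBy (fun l => f (.neg :: l)) φ)
  | f, .conj φ ψ =>
      .conj (renameBy (fun l => f (.left :: l)) φ) (renameBy (fun l => f (.right :: l)) ψ)

/-- The formula `φ` (viewed as a member of a base) with each occurrence `o`
replaced by the variable `R o`. -/
def renameForm (R : Occurrence → ℕ) (φ : Form) : Form :=
  renameBy (fun l => R (φ, l)) φ

/-- A C-renaming of `K`: it assigns a pairwise distinct fresh variable to each
occurrence of `K`. -/
structure IsCRenaming (K : PB) (R : Occurrence → ℕ) : Prop where
  fresh : ∀ o, IsOcc K o → R o ∉ varsPB K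
  inj : ∀ o o', IsOcc K o → IsOcc K o' → R o = R o' → o = o'

/-- Binary relations on occurrences, viewed as sets of ordered pairs. -/
abbrev Rel : Type := Set (Occurrence × Occurrence)

/-- `r` is an equivalence relation on `Occ(K)`. -/
structure IsEquivOn (K : PB) (r : Rel) : Prop where
  dom : ∀ q ∈ r, IsOcc K q.1 ∧ IsOcc K q.2
  refl : ∀ o, IsOcc K o → (o, o) ∈ r
  symm : ∀ q ∈ r, (q.2, q.1) ∈ r
  trans : ∀ a b c : Occurrence, (a, b) ∈ r → (b, c) ∈ r → (a, c) ∈ r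

/-- Compliance: related occurrences are occurrences of the same variable. -/
def Compliant (r : Rel) : Prop := ∀ q ∈ r, sameVar q.1 q.2

/-- Consistency of the formula `⋀R(K) ∧ ⋀_{(o,o')∈r} (R(o) ↔ R(o'))`. -/
def RelConsistent (K : PB) (R : Occurrence → ℕ) (r : Rel) : Prop :=
  ∃ w : ℕ → Bool, (∀ φ ∈ K, eval w (renameForm R φ) = true) ∧
    ∀ q ∈ r, w (R q.1) = w (R q.2)

/-- Minimal Inconsistency Relation of `K` (w.r.t. the C-renaming `R`). -/
def IsMIR (K : PB) (R : Occurrence → ℕ) (r : Rel) : Prop :=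
  IsEquivOn K r ∧ Compliant r ∧ ¬ RelConsistent K R r ∧
    ∀ r', IsEquivOn K r' → Compliant r' → ¬ RelConsistent K R r' → ¬ r' ⊂ r

/-- Maximal Consistency Relation of `K` (w.r.t. the C-renaming `R`). -/
def IsMCR (K : PB) (R : Occurrence → ℕ) (r : Rel) : Prop :=
  IsEquivOn K r ∧ Compliant r ∧ RelConsistent K R r ∧
    ∀ r', IsEquivOn K r' → Compliant r' → RelConsistent K R r' → ¬ r ⊂ r'

/-- The relation `∼_c^K`: relating occurrences of `K` of the same variable. -/
def sameVarRel (K : PB) : Rel :=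
  {q | IsOcc K q.1 ∧ IsOcc K q.2 ∧ sameVar q.1 q.2}

/-- `PN(r)`: related pairs consisting of a positive and a negative occurrence. -/
def PN (K : PB) (r : Rel) : Rel :=
  {q | q ∈ r ∧ IsPosOcc K q.1 ∧ IsNegOcc K q.2}

/-- A BMCR: an MCR satisfying Maximality-2. -/
def IsBMCR (K : PB) (R : Occurrence → ℕ) (r : Rel) : Prop :=
  IsMCR K R r ∧
    ∀ r', IsEquivOn K r' → Compliant r' → RelConsistent K R r' → ¬ PN K r ⊂ PN K r'

/-- `H` is a hitting set of the collection `S`. -/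
def IsHittingSet {α : Type} (S : Set (Set α)) (H : Set α) : Prop :=
  ∀ s ∈ S, (s ∩ H).Nonempty

/-- `H` is a minimal hitting set of the collection `S`. -/
def IsMinHittingSet {α : Type} (S : Set (Set α)) (H : Set α) : Prop :=
  IsHittingSet S H ∧ ∀ H', H' ⊂ H → ¬ IsHittingSet S H'

/-- `r` is `H`-maximal (for an equivalence relation `r ⊆ ∼_c^K`). -/
def IsHMaximal (K : PB) (H r : Rel) : Prop :=
  r ∩ H = ∅ ∧
    ∀ r', IsEquivOn K r' → r' ⊆ sameVarRel K → r ⊂ r' → (r' ∩ H).Nonempty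

/-- `r` is `H`-minimal (for an equivalence relation `r ⊆ ∼_c^K`). -/
def IsHMinimal (K : PB) (H r : Rel) : Prop :=
  H ⊆ r ∧ ∀ r', IsEquivOn K r' → r' ⊂ r → ¬ H ⊆ r'

/-- The set of all MIRs of `K`. -/
def MIRs (K : PB) (R : Occurrence → ℕ) : Set Rel := {r | IsMIR K R r}

/-- The set of all C-MCRs of `K`: relations `θ ⊆ ∼_c^K` with `∼_c^K ∖ θ` an MCR. -/
def CMCRs (K : PB) (R : Occurrence → ℕ) : Set Rel :=
  {θ | θ ⊆ sameVarRel K ∧ IsMCR K R (sameVarRel K \ θ)}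

/-- `ρ` is a `∼`-renaming for the equivalence relation `r` on `Occ(K)`:
it assigns a distinct variable to each equivalence class (so it is constant on
classes and distinguishes distinct classes), and any class containing all the
occurrences of a variable `p` is mapped to `p` itself. -/
def IsClassRenaming (K : PB) (r : Rel) (ρ : Occurrence → ℕ) : Prop :=
  (∀ o o', IsOcc K o → IsOcc K o' → (ρ o = ρ o' ↔ (o, o') ∈ r)) ∧
    (∀ o p, IsOccVar K o p → (∀ o', IsOccVar K o' p → (o, o') ∈ r) → ρ o = p)

/-- `σ` encodes a tuple `(q₁,…,q_m) ∈ P(ρ_∼, S)` where `S = (p₁,…,p_m)`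
enumerates `var(K) ∩ var(φ)`: it maps each shared variable `p` to a member of
`⌈ρ⌉(p)` and is the identity elsewhere. -/
def IsTupleChoice (K : PB) (φ : Form) (ρ : Occurrence → ℕ) (σ : ℕ → ℕ) : Prop :=
  (∀ p, p ∈ varsPB K → p ∈ vars φ → ∃ o, IsOccVar K o p ∧ σ p = ρ o) ∧
    (∀ p, ¬ (p ∈ varsPB K ∧ p ∈ vars φ) → σ p = p)

/-- Simultaneous substitution of variables by variables. -/
def substV (σ : ℕ → ℕ) : Form → Form
  | .var p => .var (σ p)
  | .neg φ => .neg (substV σ φ)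
  | .conj φ ψ => .conj (substV σ φ) (substV σ ψ)

/-- `ρ_∼(K) ⊢ ψ`. -/
def rhoEntails (K : PB) (ρ : Occurrence → ℕ) (ψ : Form) : Prop :=
  ∀ w : ℕ → Bool, (∀ φ ∈ K, eval w (renameForm ρ φ) = true) → eval w ψ = true

/-- The inference relation `K ⊩₁ φ`. -/
def Inf1 (K : PB) (R : Occurrence → ℕ) (φ : Form) : Prop :=
  ∀ r ρ, IsMCR K R r → IsClassRenaming K r ρ →
    ∃ σ, IsTupleChoice K φ ρ σ ∧ rhoEntails K ρ (substV σ φ)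

/-- The inference relation `K ⊩₂ φ`. -/
def Inf2 (K : PB) (R : Occurrence → ℕ) (φ : Form) : Prop :=
  ∀ r ρ, IsMCR K R r → IsClassRenaming K r ρ →
    ∀ σ, IsTupleChoice K φ ρ σ → rhoEntails K ρ (substV σ φ)

/-- The inference relation `K ⊩₁^B φ`. -/
def Inf1B (K : PB) (R : Occurrence → ℕ) (φ : Form) : Prop :=
  ∀ r ρ, IsBMCR K R r → IsClassRenaming K r ρ →
    ∃ σ, IsTupleChoice K φ ρ σ ∧ rhoEntails K ρ (substV σ φ)

/-- The inference relation `K ⊩₂^B φ`. -/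
def Inf2B (K : PB) (R : Occurrence → ℕ) (φ : Form) : Prop :=
  ∀ r ρ, IsBMCR K R r → IsClassRenaming K r ρ →
    ∀ σ, IsTupleChoice K φ ρ σ → rhoEntails K ρ (substV σ φ)

/-- `μ` is an o-model of `K`: any interpretation `w` with `w (R o) = μ o` for all
occurrences `o` of `K` is a model of `⋀R(K)`. -/
def OModel (K : PB) (R : Occurrence → ℕ) (μ : Occurrence → Bool) : Prop :=
  ∀ w : ℕ → Bool, (∀ o, IsOcc K o → w (R o) = μ o) →
    ∀ φ ∈ K, eval w (renameForm R φ) = true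

/-- `diff_a(μ)`: pairs of occurrences of the same variable on which `μ` differs. -/
def diffA (K : PB) (μ : Occurrence → Bool) : Rel :=
  {q | IsOcc K q.1 ∧ IsOcc K q.2 ∧ sameVar q.1 q.2 ∧ μ q.1 ≠ μ q.2}

/-- `μ` is an a-minimal o-model of `K`. -/
def AMinOModel (K : PB) (R : Occurrence → ℕ) (μ : Occurrence → Bool) : Prop :=
  OModel K R μ ∧ ∀ μ', OModel K R μ' → ¬ diffA K μ' ⊂ diffA K μ

/-- A Boolean interpretation `w` is compatible with an o-interpretation `μ`. -/
def Compatible (K : PB) (μ : Occurrence → Bool) (w : ℕ → Bool) : Prop :=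
  ∀ p ∈ varsPB K, ∃ o, IsOccVar K o p ∧ w p = μ o

/-- The inference relation `K ⊩_{a1} φ`. -/
def InfA1 (K : PB) (R : Occurrence → ℕ) (φ : Form) : Prop :=
  ∀ μ, AMinOModel K R μ → ∃ w, Compatible K μ w ∧ eval w φ = true

/-- The inference relation `K ⊩_{a2} φ`. -/
def InfA2 (K : PB) (R : Occurrence → ℕ) (φ : Form) : Prop :=
  ∀ μ, AMinOModel K R μ → ∀ w, Compatible K μ w → eval w φ = true

/-- LP_m evaluation: an LP_m interpretation assigns a (nonempty) set of truth
values to each variable; it extends to formulas pointwise. -/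
def lpEval (lam : ℕ → Set Bool) : Form → Set Bool
  | .var p => lam p
  | .neg φ => (fun v => !v) '' lpEval lam φ
  | .conj φ ψ => Set.image2 (· && ·) (lpEval lam φ) (lpEval lam ψ)

/-- `lam` is an LP_m interpretation: each variable gets a nonempty set of values. -/
def IsLPInterp (lam : ℕ → Set Bool) : Prop := ∀ p, (lam p).Nonempty

/-- `lam` is an LP_m model of `⋀K`. -/
def LPModelPB (lam : ℕ → Set Bool) (K : PB) : Prop := ∀ φ ∈ K, true ∈ lpEval lam φ

/-- `λ! = {p : λ(p) = {0,1}}`. -/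
def lpBang (lam : ℕ → Set Bool) : Set ℕ := {p | lam p = Set.univ}

/-- `lam` is a minimal LP_m model of `⋀K`. -/
def MinLPModelPB (K : PB) (lam : ℕ → Set Bool) : Prop :=
  IsLPInterp lam ∧ LPModelPB lam K ∧
    ∀ lam', IsLPInterp lam' → LPModelPB lam' K → ¬ lpBang lam' ⊂ lpBang lam

/-- `K ⊢_{LPm} φ`. -/
def LPmEntails (K : PB) (φ : Form) : Prop :=
  ∀ lam, MinLPModelPB K lam → true ∈ lpEval lam φ

/-- Replace the subformula occurrence of `φ` addressed by the path `l` by `ψ`. -/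
def replaceAt : Form → List Step → Form → Form
  | _, [], ψ => ψ
  | .neg φ, .neg :: l, ψ => .neg (replaceAt φ l ψ)
  | .conj φ χ, .left :: l, ψ => .conj (replaceAt φ l ψ) χ
  | .conj φ χ, .right :: l, ψ => .conj φ (replaceAt χ l ψ)
  | φ, _, _ => φ

/-- The equivalence relation `∼_λ` induced on `Occ(K)` by an LP_m interpretation:
its classes are `Occ(p,K)` for `|λ(p)| = 1` and `PosOcc(p,K)`, `NegOcc(p,K)` for
`λ(p) = {0,1}`. -/
def lamRel (K : PB) (lam : ℕ → Set Bool) : Rel :=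
  {q | ∃ p pol pol', IsOccOf K q.1 p pol ∧ IsOccOf K q.2 p pol' ∧
    (lam p = Set.univ → pol = pol')}

open scoped Classical in
/-- The o-interpretation `μ_λ^K` associated with an LP_m interpretation `λ`. -/
noncomputable def muOf (lam : ℕ → Set Bool) (o : Occurrence) : Bool :=
  match occAt o.1 o.2 true with
  | some (p, pol) =>
      if lam p = ({false} : Set Bool) then false
      else if lam p = ({true} : Set Bool) then true
      else pol
  | none => false

end Occ

/-!
An o-model `μ` determines its *agreement relation*: two occurrences are related when they are
occurrences of the same variable on which `μ` takes the same value. `diff_a(μ)` is the complement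
of this relation in `∼_c^K`, and every consistent compliant equivalence relation lies inside the
agreement relation of the o-model read off a witness of its consistency. Hence a-minimal
o-models are exactly the o-models whose agreement relation is an MCR, and every MCR is the
agreement relation of `o ↦ v (ρ_∼ o)` for any model `v` of `ρ_∼(K)`.

Under this correspondence a model `v` of `ρ_∼(K)` and a substitution `σ ∈ P(ρ_∼, S)` give the
interpretation `p ↦ v (σ p)` on `var(φ)`, which extends to one compatible with `o ↦ v (ρ_∼ o)`.
Conversely an interpretation `w` compatible with an a-minimal `μ` picks, for every shared
variable, an occurrence on which it agrees with `μ`; this yields a substitution `σ` and a model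
of `ρ_∼(K)` that reads `w` off `σ` on `var(φ)`.
-/

namespace Occ

lemma exists_extend_on {α β γ : Type*} (s : Set α) (f : α → β) (g : α → γ) (e : β → γ)
    (h : ∀ a ∈ s, ∀ b ∈ s, f a = f b → g a = g b) :
    ∃ e' : β → γ, (∀ a ∈ s, e' (f a) = g a) ∧ ∀ b ∉ f '' s, e' b = e b := by
  classical
  refine ⟨Function.extend (s.domRestrict f) (s.domRestrict g) e, fun a ha => ?_, fun b hb => ?_⟩
  · exact Function.FactorsThrough.extend_apply (f := s.domRestrict f) (g := s.domRestrict g)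
      (fun x y hxy => h x.1 x.2 y.1 y.2 hxy) e ⟨a, ha⟩
  · exact Function.extend_apply' _ _ _ fun ⟨⟨a, ha⟩, hab⟩ => hb ⟨a, ha, hab⟩

lemma sdiff_ssubset_sdiff_iff {α : Type*} {r s t : Set α} (hs : s ⊆ r) (ht : t ⊆ r) :
    r \ s ⊂ r \ t ↔ t ⊂ s := by
  simp only [ssubset_iff_subset_not_superset, Set.sdiff_subset_sdiff_iff_subset hs ht,
    Set.sdiff_subset_sdiff_iff_subset ht hs]

lemma eval_substV (σ : ℕ → ℕ) (w : ℕ → Bool) (ψ : Form) :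
    eval w (substV σ ψ) = eval (fun p => w (σ p)) ψ := by
  induction ψ with
  | var p => rfl
  | neg ψ ih => simp only [substV, eval, ih]
  | conj ψ χ ih₁ ih₂ => simp only [substV, eval, ih₁, ih₂]

lemma eval_congr {w w' : ℕ → Bool} (ψ : Form) (h : ∀ p ∈ vars ψ, w p = w' p) :
    eval w ψ = eval w' ψ := by
  induction ψ with
  | var p => exact h p (Finset.mem_singleton_self p)
  | neg ψ ih => simp only [eval, ih h]
  | conj ψ χ ih₁ ih₂ =>
    simp only [eval, ih₁ fun p hp => h p (Finset.mem_union_left _ hp),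
      ih₂ fun p hp => h p (Finset.mem_union_right _ hp)]

lemma eval_renameBy_congr {w w' : ℕ → Bool} (ψ : Form) (pol : Bool) (f f' : List Step → ℕ)
    (h : ∀ l, (occAt ψ l pol).isSome → w (f l) = w' (f' l)) :
    eval w (renameBy f ψ) = eval w' (renameBy f' ψ) := by
  induction ψ generalizing pol f f' with
  | var p => exact h [] rfl
  | neg ψ ih => simp only [renameBy, eval, ih (!pol) _ _ fun l => h (.neg :: l)]
  | conj ψ χ ih₁ ih₂ =>
    simp only [renameBy, eval, ih₁ pol _ _ fun l => h (.left :: l),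
      ih₂ pol _ _ fun l => h (.right :: l)]

lemma mem_vars_of_occAt_eq_some {ψ : Form} {l : List Step} {pol : Bool} {p : ℕ} {b : Bool}
    (h : occAt ψ l pol = some (p, b)) : p ∈ vars ψ := by
  induction ψ generalizing l pol with
  | var q =>
    match l, h with
    | [], h => simp_all [occAt, vars]
  | neg ψ ih =>
    match l, h with
    | .neg :: l, h => exact ih h
  | conj ψ χ ih₁ ih₂ =>
    match l, h with
    | .left :: l, h => exact Finset.mem_union_left _ (ih₁ h)
    | .right :: l, h => exact Finset.mem_union_right _ (ih₂ h)

lemma exists_occAt_eq_some {ψ : Form} {p : ℕ} (hp : p ∈ vars ψ) (pol : Bool) :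
    ∃ l b, occAt ψ l pol = some (p, b) := by
  induction ψ generalizing pol with
  | var q => exact ⟨[], pol, by rw [Finset.mem_singleton.1 hp]; rfl⟩
  | neg ψ ih =>
    obtain ⟨l, b, h⟩ := ih hp (!pol)
    exact ⟨.neg :: l, b, h⟩
  | conj ψ χ ih₁ ih₂ =>
    rcases Finset.mem_union.1 hp with hψ | hχ
    · obtain ⟨l, b, h⟩ := ih₁ hψ pol
      exact ⟨.left :: l, b, h⟩
    · obtain ⟨l, b, h⟩ := ih₂ hχ pol
      exact ⟨.right :: l, b, h⟩

variable {K : PB}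

lemma eval_renameForm_congr {ψ : Form} (hψ : ψ ∈ K) {w w' : ℕ → Bool}
    {f f' : Occurrence → ℕ} (h : ∀ o, IsOcc K o → w (f o) = w' (f' o)) :
    eval w (renameForm f ψ) = eval w' (renameForm f' ψ) :=
  eval_renameBy_congr ψ true _ _ fun l hl =>
    let ⟨⟨p, pol⟩, hocc⟩ := Option.isSome_iff_exists.1 hl
    h (ψ, l) ⟨hψ, p, pol, hocc⟩

lemma IsOccVar.isOcc {o : Occurrence} {p : ℕ} (h : IsOccVar K o p) : IsOcc K o :=
  let ⟨pol, hK, hocc⟩ := h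
  ⟨hK, p, pol, hocc⟩

lemma IsOccVar.mem_varsPB {o : Occurrence} {p : ℕ} (h : IsOccVar K o p) : p ∈ varsPB K :=
  let ⟨_, hK, hocc⟩ := h
  Finset.mem_sup.2 ⟨o.1, hK, mem_vars_of_occAt_eq_some hocc⟩

lemma exists_isOccVar_of_mem_varsPB {p : ℕ} (hp : p ∈ varsPB K) : ∃ o, IsOccVar K o p := by
  obtain ⟨ψ, hψ, hpψ⟩ := Finset.mem_sup.1 hp
  obtain ⟨l, b, h⟩ := exists_occAt_eq_some hpψ true
  exact ⟨(ψ, l), b, hψ, h⟩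

lemma IsCRenaming.injOn {R : Occurrence → ℕ} (hR : IsCRenaming K R) :
    Set.InjOn R {o | IsOcc K o} :=
  fun o ho o' ho' h => hR.inj o o' ho ho' h

lemma sameVar_refl {o : Occurrence} (h : IsOcc K o) : sameVar o o :=
  let ⟨_, p, pol, hocc⟩ := h
  ⟨p, pol, pol, hocc, hocc⟩

lemma sameVar.symm {o o' : Occurrence} (h : sameVar o o') : sameVar o' o :=
  let ⟨p, pol, pol', h₁, h₂⟩ := h
  ⟨p, pol', pol, h₂, h₁⟩

lemma sameVar.trans {a b c : Occurrence} (hab : sameVar a b) (hbc : sameVar b c) :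
    sameVar a c := by
  obtain ⟨p, pol, pol', ha, hb⟩ := hab
  obtain ⟨q, pol₂, pol₂', hb', hc⟩ := hbc
  obtain ⟨rfl, -⟩ := Prod.mk.inj (Option.some.inj (hb.symm.trans hb'))
  exact ⟨p, pol, pol₂', ha, hc⟩

def agreeRel (K : PB) (μ : Occurrence → Bool) : Rel :=
  {q | IsOcc K q.1 ∧ IsOcc K q.2 ∧ sameVar q.1 q.2 ∧ μ q.1 = μ q.2}

lemma agreeRel_isEquivOn (μ : Occurrence → Bool) : IsEquivOn K (agreeRel K μ) where
  dom _ hq := ⟨hq.1, hq.2.1⟩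
  refl _ ho := ⟨ho, ho, sameVar_refl ho, rfl⟩
  symm _ hq := ⟨hq.2.1, hq.1, hq.2.2.1.symm, hq.2.2.2.symm⟩
  trans _ _ _ hab hbc := ⟨hab.1, hbc.2.1, hab.2.2.1.trans hbc.2.2.1, hab.2.2.2.trans hbc.2.2.2⟩

lemma agreeRel_compliant (μ : Occurrence → Bool) : Compliant (agreeRel K μ) :=
  fun _ hq => hq.2.2.1

lemma diffA_ssubset_diffA_iff {μ μ' : Occurrence → Bool} :
    diffA K μ' ⊂ diffA K μ ↔ agreeRel K μ ⊂ agreeRel K μ' := by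
  have hdiff : ∀ μ, diffA K μ = sameVarRel K \ agreeRel K μ := fun μ => by
    ext; simp only [diffA, sameVarRel, agreeRel, Set.mem_ofPred_eq, Set.mem_sdiff]; tauto
  have hsub : ∀ μ, agreeRel K μ ⊆ sameVarRel K := fun μ _ hq => ⟨hq.1, hq.2.1, hq.2.2.1⟩
  rw [hdiff, hdiff, sdiff_ssubset_sdiff_iff (hsub μ') (hsub μ)]

section OModel

variable {R : Occurrence → ℕ} {μ : Occurrence → Bool}

lemma oModel_comp {ρ : Occurrence → ℕ} {v : ℕ → Bool}
    (hv : ∀ ψ ∈ K, eval v (renameForm ρ ψ) = true) : OModel K R (fun o => v (ρ o)) :=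
  fun _ hw ψ hψ => (eval_renameForm_congr hψ hw).trans (hv ψ hψ)

lemma exists_comp_eq_of_injOn (hR : Set.InjOn R {o | IsOcc K o}) (μ : Occurrence → Bool) :
    ∃ w : ℕ → Bool, ∀ o, IsOcc K o → w (R o) = μ o :=
  (exists_extend_on {o | IsOcc K o} R μ (fun _ => false)
    fun _ ho _ ho' h => congrArg μ (hR ho ho' h)).imp fun _ hw => hw.1

lemma OModel.models_renameForm (hR : Set.InjOn R {o | IsOcc K o}) (hμ : OModel K R μ)
    {ρ : Occurrence → ℕ} {v : ℕ → Bool} (hv : ∀ o, IsOcc K o → v (ρ o) = μ o) :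
    ∀ ψ ∈ K, eval v (renameForm ρ ψ) = true := by
  obtain ⟨w, hw⟩ := exists_comp_eq_of_injOn hR μ
  intro ψ hψ
  rw [eval_renameForm_congr hψ fun o ho => (hv o ho).trans (hw o ho).symm]
  exact hμ w hw ψ hψ

lemma OModel.relConsistent (hR : Set.InjOn R {o | IsOcc K o}) (hμ : OModel K R μ) :
    RelConsistent K R (agreeRel K μ) := by
  obtain ⟨w, hw⟩ := exists_comp_eq_of_injOn hR μ
  exact ⟨w, hμ w hw, fun q hq => by rw [hw _ hq.1, hw _ hq.2.1, hq.2.2.2]⟩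

lemma RelConsistent.exists_oModel {r : Rel} (hEq : IsEquivOn K r) (hC : Compliant r)
    (h : RelConsistent K R r) : ∃ μ, OModel K R μ ∧ r ⊆ agreeRel K μ :=
  let ⟨_, hv, hr⟩ := h
  ⟨_, oModel_comp hv, fun q hq => ⟨(hEq.dom q hq).1, (hEq.dom q hq).2, hC q hq, hr q hq⟩⟩

lemma AMinOModel.isMCR_agreeRel (hR : Set.InjOn R {o | IsOcc K o}) (hμ : AMinOModel K R μ) :
    IsMCR K R (agreeRel K μ) := by
  refine ⟨agreeRel_isEquivOn μ, agreeRel_compliant μ, hμ.1.relConsistent hR,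
    fun r hEq hC hcons hlt => ?_⟩
  obtain ⟨μ', hμ', hsub⟩ := hcons.exists_oModel hEq hC
  exact hμ.2 μ' hμ' (diffA_ssubset_diffA_iff.2 (hlt.trans_subset hsub))

lemma IsMCR.aMinOModel (hR : Set.InjOn R {o | IsOcc K o}) {r : Rel} (hr : IsMCR K R r)
    (hμ : OModel K R μ) (hsub : r ⊆ agreeRel K μ) : AMinOModel K R μ := by
  have hmax : ∀ μ', OModel K R μ' → ¬ r ⊂ agreeRel K μ' := fun μ' hμ' =>
    hr.2.2.2 _ (agreeRel_isEquivOn μ') (agreeRel_compliant μ') (hμ'.relConsistent hR)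
  obtain rfl : r = agreeRel K μ := hsub.eq_of_not_ssubset (hmax μ hμ)
  exact ⟨hμ, fun μ' hμ' hlt => hmax μ' hμ' (diffA_ssubset_diffA_iff.1 hlt)⟩

end OModel

section ClassRenaming

def varOf (o : Occurrence) : ℕ := ((occAt o.1 o.2 true).map Prod.fst).getD 0

lemma IsOccVar.varOf_eq {o : Occurrence} {p : ℕ} (h : IsOccVar K o p) : varOf o = p := by
  obtain ⟨pol, -, hocc⟩ := h
  simp [varOf, hocc]

lemma IsOcc.isOccVar_varOf {o : Occurrence} (h : IsOcc K o) : IsOccVar K o (varOf o) := by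
  obtain ⟨hK, p, pol, hocc⟩ := h
  exact ⟨pol, hK, by simp [varOf, hocc]⟩

lemma sameVar.varOf_eq {o o' : Occurrence} (h : sameVar o o') : varOf o = varOf o' := by
  obtain ⟨p, pol, pol', h₁, h₂⟩ := h
  simp [varOf, h₁, h₂]

variable {R : Occurrence → ℕ} {r : Rel} {N : ℕ} {o o' : Occurrence}

def IsFullClass (K : PB) (r : Rel) (o : Occurrence) : Prop :=
  ∀ o', IsOccVar K o' (varOf o) → (o, o') ∈ r

/-- A class that is not full goes to `N` plus the least `R`-image of its members: this separates
classes because `R` is injective on occurrences. -/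
noncomputable def classRenaming (K : PB) (R : Occurrence → ℕ) (r : Rel) (N : ℕ)
    (o : Occurrence) : ℕ :=
  open Classical in
  if IsFullClass K r o then varOf o else N + sInf {n | ∃ o', (o, o') ∈ r ∧ R o' = n}

lemma IsFullClass.of_mem (hEq : IsEquivOn K r) (hC : Compliant r) (h : (o, o') ∈ r)
    (hf : IsFullClass K r o) : IsFullClass K r o' := fun o'' ho'' =>
  hEq.trans _ _ _ (hEq.symm _ h) (hf o'' ((hC _ h).varOf_eq ▸ ho''))

lemma classRenaming_lt (hN : ∀ p ∈ varsPB K, p < N) (ho : IsOcc K o) (hf : IsFullClass K r o) :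
    classRenaming K R r N o < N := by
  rw [classRenaming, if_pos hf]
  exact hN _ ho.isOccVar_varOf.mem_varsPB

lemma le_classRenaming (hf : ¬ IsFullClass K r o) : N ≤ classRenaming K R r N o := by
  rw [classRenaming, if_neg hf]
  exact Nat.le_add_right _ _

lemma classRenaming_eq_iff (hR : Set.InjOn R {o | IsOcc K o}) (hEq : IsEquivOn K r)
    (hC : Compliant r) (hN : ∀ p ∈ varsPB K, p < N) (ho : IsOcc K o) (ho' : IsOcc K o') :
    classRenaming K R r N o = classRenaming K R r N o' ↔ (o, o') ∈ r := by
  have hcls : ∀ {o o'}, (o, o') ∈ r →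
      {n | ∃ a, (o, a) ∈ r ∧ R a = n} ⊆ {n | ∃ a, (o', a) ∈ r ∧ R a = n} :=
    fun h _ ⟨a, ha, hn⟩ => ⟨a, hEq.trans _ _ _ (hEq.symm _ h) ha, hn⟩
  constructor
  · intro h
    by_cases hf : IsFullClass K r o <;> by_cases hf' : IsFullClass K r o'
    · rw [classRenaming, classRenaming, if_pos hf, if_pos hf'] at h
      exact hf o' (h ▸ ho'.isOccVar_varOf)
    · exact absurd h ((classRenaming_lt hN ho hf).trans_le (le_classRenaming hf')).ne
    · exact absurd h.symm ((classRenaming_lt hN ho' hf').trans_le (le_classRenaming hf)).ne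
    · rw [classRenaming, classRenaming, if_neg hf, if_neg hf', Nat.add_left_cancel_iff] at h
      obtain ⟨a, ha, hRa⟩ := Nat.sInf_mem (s := {n | ∃ a, (o, a) ∈ r ∧ R a = n})
        ⟨R o, o, hEq.refl o ho, rfl⟩
      obtain ⟨b, hb, hRb⟩ := Nat.sInf_mem (s := {n | ∃ b, (o', b) ∈ r ∧ R b = n})
        ⟨R o', o', hEq.refl o' ho', rfl⟩
      obtain rfl : a = b :=
        hR (hEq.dom _ ha).2 (hEq.dom _ hb).2 (hRa.trans (h.trans hRb.symm))
      exact hEq.trans _ _ _ ha (hEq.symm _ hb)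
  · intro h
    by_cases hf : IsFullClass K r o
    · rw [classRenaming, classRenaming, if_pos hf, if_pos (hf.of_mem hEq hC h),
        (hC _ h).varOf_eq]
    · have hf' : ¬ IsFullClass K r o' := fun hf' => hf (hf'.of_mem hEq hC (hEq.symm _ h))
      rw [classRenaming, classRenaming, if_neg hf, if_neg hf',
        (hcls h).antisymm (hcls (hEq.symm _ h))]

lemma exists_isClassRenaming (hR : Set.InjOn R {o | IsOcc K o}) (hEq : IsEquivOn K r)
    (hC : Compliant r) (s : Finset ℕ) :
    ∃ ρ, IsClassRenaming K r ρ ∧ ∀ o, IsOcc K o → ρ o ∈ s → ρ o ∈ varsPB K := by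
  set N := (varsPB K ∪ s).sup id + 1
  have hN : ∀ p ∈ varsPB K ∪ s, p < N := fun p hp =>
    Nat.lt_succ_of_le (Finset.le_sup (f := id) hp)
  have hNK : ∀ p ∈ varsPB K, p < N := fun p hp => hN p (Finset.mem_union_left _ hp)
  refine ⟨classRenaming K R r N,
    ⟨fun o o' ho ho' => classRenaming_eq_iff hR hEq hC hNK ho ho', fun o p hop hall => ?_⟩,
    fun o ho hs => ?_⟩
  · have hf : IsFullClass K r o := fun o' ho' => hall o' (hop.varOf_eq ▸ ho')
    rw [classRenaming, if_pos hf, hop.varOf_eq]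
  · by_cases hf : IsFullClass K r o
    · rw [classRenaming, if_pos hf]
      exact ho.isOccVar_varOf.mem_varsPB
    · exact absurd (hN _ (Finset.mem_union_right _ hs)) (le_classRenaming hf).not_gt

lemma IsClassRenaming.subset_agreeRel {ρ : Occurrence → ℕ} (hEq : IsEquivOn K r)
    (hC : Compliant r) (hρ : IsClassRenaming K r ρ) (v : ℕ → Bool) :
    r ⊆ agreeRel K (fun o => v (ρ o)) := fun q hq =>
  ⟨(hEq.dom q hq).1, (hEq.dom q hq).2, hC q hq,
    congrArg v (((hρ.1 _ _ (hEq.dom q hq).1 (hEq.dom q hq).2).2 hq))⟩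

end ClassRenaming

lemma exists_isTupleChoice {φ : Form} (ρ : Occurrence → ℕ) {v w : ℕ → Bool}
    (hK : ∀ p ∈ varsPB K, p ∈ vars φ → ∃ o, IsOccVar K o p ∧ v (ρ o) = w p)
    (hφ : ∀ p ∈ vars φ, p ∉ varsPB K → v p = w p) :
    ∃ σ, IsTupleChoice K φ ρ σ ∧ ∀ p ∈ vars φ, v (σ p) = w p := by
  classical
  choose o ho hvo using hK
  refine ⟨fun p => if h : p ∈ varsPB K ∧ p ∈ vars φ then ρ (o p h.1 h.2) else p,
    ⟨fun p hpK hpφ => ⟨o p hpK hpφ, ho p hpK hpφ, dif_pos ⟨hpK, hpφ⟩⟩,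
      fun p hp => dif_neg hp⟩,
    fun p hpφ => ?_⟩
  by_cases hpK : p ∈ varsPB K
  · simp only [dif_pos (And.intro hpK hpφ)]
    exact hvo p hpK hpφ
  · simp only [dif_neg fun h : p ∈ varsPB K ∧ p ∈ vars φ => hpK h.1]
    exact hφ p hpφ hpK

lemma exists_compatible_eqOn (μ : Occurrence → Bool) (v : ℕ → Bool) (s : Finset ℕ)
    (h : ∀ p ∈ varsPB K, p ∈ s → ∃ o, IsOccVar K o p ∧ v p = μ o) :
    ∃ w, Compatible K μ w ∧ ∀ p ∈ s, w p = v p := by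
  classical
  choose o ho using fun p (hp : p ∈ varsPB K) => exists_isOccVar_of_mem_varsPB hp
  refine ⟨fun p => if hp : p ∈ varsPB K ∧ p ∉ s then μ (o p hp.1) else v p,
    fun p hp => ?_, fun p hp => dif_neg fun h => h.2 hp⟩
  by_cases hps : p ∈ s
  · obtain ⟨o', ho', hvo'⟩ := h p hp hps
    exact ⟨o', ho', (dif_neg fun h => h.2 hps).trans hvo'⟩
  · exact ⟨o p hp, ho p hp, dif_pos ⟨hp, hps⟩⟩

variable {R : Occurrence → ℕ} {φ : Form}

lemma infA2_of_inf2 (hR : IsCRenaming K R) (h : Inf2 K R φ) : InfA2 K R φ := by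
  intro μ hμ w hw
  have hr := hμ.isMCR_agreeRel hR.injOn
  obtain ⟨ρ, hρ, hρφ⟩ := exists_isClassRenaming hR.injOn hr.1 hr.2.1 (vars φ)
  -- `v` reads `μ` through `ρ` and is `w` elsewhere, in particular on `var(φ) ∖ var(K)`.
  obtain ⟨v, hvρ, hv⟩ := exists_extend_on {o | IsOcc K o} ρ μ w
    fun o ho o' ho' h => ((hρ.1 o o' ho ho').1 h).2.2.2
  obtain ⟨σ, hσ, hσv⟩ := exists_isTupleChoice ρ (v := v) (w := w)
    (fun p hpK _ => (hw p hpK).imp fun o ho => ⟨ho.1, (hvρ o ho.1.isOcc).trans ho.2.symm⟩)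
    (fun p hpφ hpK => hv p fun ⟨o, ho, hop⟩ => hpK (hop ▸ hρφ o ho (hop ▸ hpφ)))
  have hE := h _ ρ hr hρ σ hσ v (hμ.1.models_renameForm hR.injOn hvρ)
  rwa [eval_substV, eval_congr φ hσv] at hE

lemma inf2_of_infA2 (hR : IsCRenaming K R) (h : InfA2 K R φ) : Inf2 K R φ := by
  intro r ρ hr hρ σ hσ v hv
  have hμ := hr.aMinOModel hR.injOn (oModel_comp hv) (hρ.subset_agreeRel hr.1 hr.2.1 v)
  obtain ⟨w, hw, hwv⟩ := exists_compatible_eqOn _ (fun p => v (σ p)) (vars φ)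
    fun p hpK hpφ => (hσ.1 p hpK hpφ).imp fun o ho => ⟨ho.1, congrArg v ho.2⟩
  rw [eval_substV, ← eval_congr φ hwv]
  exact h _ hμ w hw

end Occ

/-- Proposition 15: `K ⊩_{a2} φ` iff `K ⊩₂ φ`. -/
theorem infA2_iff_inf2 (K : Occ.PB)
    (R : Occ.Occurrence → ℕ) (hR : Occ.IsCRenaming K R) (φ : Occ.Form) :
    Occ.InfA2 K R φ ↔ Occ.Inf2 K R φ :=
  ⟨Occ.inf2_of_infA2 hR, Occ.infA2_of_inf2 hR⟩
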